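/- Let E be a finite-dimensional real inner product space, let f : E → ℝ be L-smooth with L > 0, and let 0 < η ≤ 1/L. Let (Ω, μ) be a probability space and let V : Ω → E be an integrable random vector with mean m = ∫ V dμ, such that ω ↦ f(x − η V(ω)) and ω ↦ ‖V(ω) − m‖² are integrable. Then for every x ∈ E: (η/2)·‖∇f(x)‖² ≤ f(x) − ∫ f(x − η V(ω)) dμ(ω) + (L η²/2)·∫ ‖V(ω) − m‖² dμ(ω) + (η/2)·‖∇f(x) − m‖². -/

import Mathlib

/-!
Let `m = 𝔼 V`. Integrating the quadratic upper bound of `f` around the point `x - η m`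
kills the linear term, since `x - η V` has mean `x - η m`, and leaves
`𝔼 f(x - η V) ≤ f(x - η m) + (L η² / 2) 𝔼 ‖V - m‖²`. A deterministic descent step along the
biased direction `m` gives `f(x - η m) ≤ f(x) - (η/2)‖∇f(x)‖² + (η/2)‖∇f(x) - m‖²`, because
`L η ≤ 1`.
-/

open scoped RealInnerProductSpace
open MeasureTheory

section

variable {E : Type*} [NormedAddCommGroup E] [InnerProductSpace ℝ E]

def HasQuadraticUpperBoundAt (f : E → ℝ) (c : E) (L : ℝ) (y : E) : Prop :=
  ∀ w, f w ≤ f y + ⟪c, w - y⟫ + L / 2 * ‖w - y‖ ^ 2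

namespace HasQuadraticUpperBoundAt

theorem integral_comp_le [CompleteSpace E]
    {Ω : Type*} [MeasurableSpace Ω] {μ : Measure Ω} [IsProbabilityMeasure μ]
    {f : E → ℝ} {y c : E} {L : ℝ}
    (hf : HasQuadraticUpperBoundAt f c L y)
    {U : Ω → E} (hU : Integrable U μ) (hmean : ∫ ω, U ω ∂μ = y)
    (hfU : Integrable (fun ω => f (U ω)) μ)
    (hvar : Integrable (fun ω => ‖U ω - y‖ ^ 2) μ) :
    ∫ ω, f (U ω) ∂μ ≤ f y + L / 2 * ∫ ω, ‖U ω - y‖ ^ 2 ∂μ := by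
  have hUy : Integrable (fun ω => U ω - y) μ := hU.sub (integrable_const y)
  have hlin : Integrable (fun ω => ⟪c, U ω - y⟫) μ := hUy.const_inner c
  have hlin_zero : ∫ ω, ⟪c, U ω - y⟫ ∂μ = 0 := by
    rw [integral_inner hUy, integral_sub hU (integrable_const y), hmean, integral_const,
      probReal_univ, one_smul, sub_self, inner_zero_right]
  have haffine : Integrable (fun ω => f y + ⟪c, U ω - y⟫) μ := (integrable_const _).add hlin
  have hquad : Integrable (fun ω => L / 2 * ‖U ω - y‖ ^ 2) μ := hvar.const_mul _
  calc ∫ ω, f (U ω) ∂μ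
      ≤ ∫ ω, (f y + ⟪c, U ω - y⟫ + L / 2 * ‖U ω - y‖ ^ 2) ∂μ :=
        integral_mono hfU (haffine.add hquad) fun ω => hf _
    _ = f y + L / 2 * ∫ ω, ‖U ω - y‖ ^ 2 ∂μ := by
        rw [integral_add haffine hquad, integral_add (integrable_const _) hlin, hlin_zero,
          integral_const, integral_const_mul, probReal_univ, one_smul, add_zero]

theorem apply_sub_smul_le
    {f : E → ℝ} {x c : E} {L η : ℝ}
    (hf : HasQuadraticUpperBoundAt f c L x)
    (hη₀ : 0 ≤ η) (hLη : L * η ≤ 1) (d : E) :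
    f (x - η • d) ≤ f x - η / 2 * ‖c‖ ^ 2 + η / 2 * ‖c - d‖ ^ 2 := by
  have hstep := hf (x - η • d)
  rw [sub_sub_cancel_left, inner_neg_right, real_inner_smul_right, norm_neg, norm_smul,
    Real.norm_of_nonneg hη₀, mul_pow] at hstep
  have hcurv : L * η ^ 2 * ‖d‖ ^ 2 ≤ η * ‖d‖ ^ 2 := by
    have : L * η ^ 2 ≤ η := by nlinarith
    exact mul_le_mul_of_nonneg_right this (sq_nonneg _)
  rw [norm_sub_sq_real]
  linarith

end HasQuadraticUpperBoundAt

end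

theorem statement3 {E : Type*} [NormedAddCommGroup E] [InnerProductSpace ℝ E]
    [FiniteDimensional ℝ E]
    (f : E → ℝ) (g : E → E) (L : ℝ) (hL : 0 < L)
    (hsmooth : ∀ v w : E, f w ≤ f v + ⟪g v, w - v⟫ + L / 2 * ‖w - v‖ ^ 2)
    (η : ℝ) (hη₀ : 0 < η) (hη : η ≤ 1 / L)
    {Ω : Type*} [MeasurableSpace Ω] (μ : Measure Ω) [IsProbabilityMeasure μ]
    (V : Ω → E) (hVint : Integrable V μ)
    (x : E)
    (hfint : Integrable (fun ω => f (x - η • V ω)) μ)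
    (hvarint : Integrable (fun ω => ‖V ω - ∫ ω', V ω' ∂μ‖ ^ 2) μ) :
    η / 2 * ‖g x‖ ^ 2 ≤
      f x - (∫ ω, f (x - η • V ω) ∂μ)
        + L * η ^ 2 / 2 * (∫ ω, ‖V ω - ∫ ω', V ω' ∂μ‖ ^ 2 ∂μ)
        + η / 2 * ‖g x - ∫ ω', V ω' ∂μ‖ ^ 2 := by
  set m := ∫ ω', V ω' ∂μ
  have hdev : ∀ ω, ‖(x - η • V ω) - (x - η • m)‖ ^ 2 = η ^ 2 * ‖V ω - m‖ ^ 2 := fun ω => by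
    rw [sub_sub_sub_cancel_left, ← smul_sub, norm_sub_rev, norm_smul,
      Real.norm_of_nonneg hη₀.le, mul_pow]
  have hηV : Integrable (fun ω => η • V ω) μ := hVint.smul η
  have hU : Integrable (fun ω => x - η • V ω) μ := (integrable_const x).sub hηV
  have hmean : ∫ ω, (x - η • V ω) ∂μ = x - η • m := by
    rw [integral_sub (integrable_const x) hηV, integral_const, integral_smul,
      probReal_univ, one_smul]
  have hexpect := HasQuadraticUpperBoundAt.integral_comp_le (hsmooth (x - η • m)) hU hmean
    hfint (by simpa only [hdev] using hvarint.const_mul (η ^ 2))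
  simp only [hdev, integral_const_mul] at hexpect
  have hLη : L * η ≤ 1 := by rwa [le_div_iff₀ hL, mul_comm] at hη
  have hdescent := HasQuadraticUpperBoundAt.apply_sub_smul_le (hsmooth x) hη₀.le hLη m
  linarith
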